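/- The map μ sending the coset (a,f)·A₂(n) in Ĝ²(n)/A₂(n) to (a, f_s) ∈ G²(n) is a well-defined group isomorphism from the quotient group Ĝ²(n)/A₂(n) onto G²(n). -/

import Mathlib

abbrev V (n : ℕ) : Type := Fin n → ℝ

/-- Bilinear maps `ℝ^n × ℝ^n → ℝ^n`. -/
abbrev L2 (n : ℕ) := V n →ₗ[ℝ] V n →ₗ[ℝ] V n

/-- `GL(n,ℝ)`, realized as the invertible linear endomorphisms of `ℝ^n`. -/
abbrev GLn (n : ℕ) := (V n →ₗ[ℝ] V n)ˣ

/-- The underlying set of `Ĝ²(n)`. -/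
abbrev Ghat (n : ℕ) := GLn n × L2 n

/-- The symmetric part `f_s = (f + fᵗ)/2`. -/
noncomputable def symPart {n : ℕ} (f : L2 n) : L2 n := (1/2 : ℝ) • (f + f.flip)

/-- The multiplication `(a,f)(a',f') = (a·a', a ∘ f' + f(a',a'))` of `Ĝ²(n)`. -/
noncomputable def gmul {n : ℕ} (p q : Ghat n) : Ghat n :=
  (p.1 * q.1,
    q.2.compr₂ (p.1 : V n →ₗ[ℝ] V n) +
      p.2.compl₁₂ (q.1 : V n →ₗ[ℝ] V n) (q.1 : V n →ₗ[ℝ] V n))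

/-- The inversion `(a,f)⁻¹ = (a⁻¹, -a⁻¹ ∘ f(a⁻¹,a⁻¹))` of `Ĝ²(n)`. -/
noncomputable def ginv {n : ℕ} (p : Ghat n) : Ghat n :=
  (p.1⁻¹,
    -((p.2.compl₁₂ ((p.1⁻¹ : GLn n) : V n →ₗ[ℝ] V n) ((p.1⁻¹ : GLn n) : V n →ₗ[ℝ] V n)).compr₂
        ((p.1⁻¹ : GLn n) : V n →ₗ[ℝ] V n)))

lemma inv_app {n : ℕ} (a : GLn n) (x : V n) :
    ((a⁻¹ : GLn n) : V n →ₗ[ℝ] V n) ((a : V n →ₗ[ℝ] V n) x) = x := by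
  rw [← Module.End.mul_apply, Units.inv_mul, Module.End.one_apply]

lemma app_inv {n : ℕ} (a : GLn n) (x : V n) :
    (a : V n →ₗ[ℝ] V n) (((a⁻¹ : GLn n) : V n →ₗ[ℝ] V n) x) = x := by
  rw [← Module.End.mul_apply, Units.mul_inv, Module.End.one_apply]

lemma gmul_assoc {n : ℕ} (p q r : Ghat n) : gmul (gmul p q) r = gmul p (gmul q r) := by
  refine Prod.ext (mul_assoc _ _ _) ?_
  ext u v
  simp [gmul, LinearMap.compr₂_apply, LinearMap.compl₁₂_apply, Units.val_mul,
    Module.End.mul_apply, map_add, add_assoc]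

lemma gone_mul {n : ℕ} (p : Ghat n) : gmul ((1 : GLn n), (0 : L2 n)) p = p := by
  refine Prod.ext (one_mul _) ?_
  ext u v
  simp [gmul, LinearMap.compr₂_apply, LinearMap.compl₁₂_apply]

lemma gmul_one {n : ℕ} (p : Ghat n) : gmul p ((1 : GLn n), (0 : L2 n)) = p := by
  refine Prod.ext (mul_one _) ?_
  ext u v
  simp [gmul, LinearMap.compr₂_apply, LinearMap.compl₁₂_apply]

lemma ginv_mul {n : ℕ} (p : Ghat n) : gmul (ginv p) p = ((1 : GLn n), (0 : L2 n)) := by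
  refine Prod.ext (inv_mul_cancel _) ?_
  ext u v
  simp [gmul, ginv, LinearMap.compr₂_apply, LinearMap.compl₁₂_apply, inv_app]

/-- The group `Ĝ²(n)`. -/
noncomputable instance GhatGroup (n : ℕ) : Group (Ghat n) where
  mul := gmul
  one := ((1 : GLn n), (0 : L2 n))
  inv := ginv
  mul_assoc := gmul_assoc
  one_mul := gone_mul
  mul_one := gmul_one
  inv_mul_cancel := ginv_mul

lemma ghat_mul_def {n : ℕ} (p q : Ghat n) : p * q = gmul p q := rfl
lemma ghat_inv_def {n : ℕ} (p : Ghat n) : p⁻¹ = ginv p := rfl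
lemma ghat_one_def {n : ℕ} : (1 : Ghat n) = ((1 : GLn n), (0 : L2 n)) := rfl

/-- `A₂(n)` as a subgroup of `Ĝ²(n)`: elements `(I,h)` with `h` antisymmetric. -/
noncomputable def A2 (n : ℕ) : Subgroup (Ghat n) where
  carrier := {p | p.1 = 1 ∧ ∀ u v, p.2 u v = - p.2 v u}
  one_mem' := by
    refine ⟨rfl, fun u v => ?_⟩
    simp [ghat_one_def]
  mul_mem' := by
    rintro p q ⟨hp1, hp2⟩ ⟨hq1, hq2⟩
    refine ⟨by simp [ghat_mul_def, gmul, hp1, hq1], fun u v => ?_⟩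
    simp only [ghat_mul_def, gmul, hp1, hq1, LinearMap.add_apply, LinearMap.compr₂_apply,
      LinearMap.compl₁₂_apply, Units.val_one, Module.End.one_apply]
    rw [hp2 u v, hq2 u v]
    abel
  inv_mem' := by
    rintro p ⟨hp1, hp2⟩
    refine ⟨by simp [ghat_inv_def, ginv, hp1], fun u v => ?_⟩
    simp only [ghat_inv_def, ginv, hp1, inv_one, LinearMap.neg_apply, LinearMap.compr₂_apply,
      LinearMap.compl₁₂_apply, Units.val_one, Module.End.one_apply]
    rw [hp2 u v]

instance A2_normal (n : ℕ) : (A2 n).Normal := by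
  constructor
  rintro s ⟨hs1, hs2⟩ g
  constructor
  · simp [ghat_mul_def, ghat_inv_def, gmul, ginv, hs1]
  · intro u v
    simp only [ghat_mul_def, ghat_inv_def, gmul, ginv, hs1, mul_one, LinearMap.add_apply,
      LinearMap.compr₂_apply, LinearMap.compl₁₂_apply, LinearMap.neg_apply, Units.val_one,
      Module.End.one_apply, map_neg, app_inv, map_add]
    rw [hs2 (((g.1⁻¹ : GLn n) : V n →ₗ[ℝ] V n) u) (((g.1⁻¹ : GLn n) : V n →ₗ[ℝ] V n) v)]
    simp only [map_neg]
    abel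

/-- `G²(n)` as a subgroup of `Ĝ²(n)`: elements with symmetric bilinear part. -/
noncomputable def G2 (n : ℕ) : Subgroup (Ghat n) where
  carrier := {p | ∀ u v, p.2 u v = p.2 v u}
  one_mem' := by intro u v; simp [ghat_one_def]
  mul_mem' := by
    rintro p q hp hq u v
    simp only [ghat_mul_def, gmul, LinearMap.add_apply, LinearMap.compr₂_apply,
      LinearMap.compl₁₂_apply]
    rw [hp ((q.1 : V _ →ₗ[ℝ] V _) u) ((q.1 : V _ →ₗ[ℝ] V _) v), hq u v]
  inv_mem' := by
    rintro p hp u v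
    simp only [ghat_inv_def, ginv, LinearMap.neg_apply, LinearMap.compr₂_apply,
      LinearMap.compl₁₂_apply]
    rw [hp (((p.1⁻¹ : GLn _) : V _ →ₗ[ℝ] V _) u) (((p.1⁻¹ : GLn _) : V _ →ₗ[ℝ] V _) v)]

/-!
Symmetrization `f ↦ f_s` is linear and commutes with both `f ↦ a ∘ f` and `f ↦ f(a', a')`, so
`(a, f) ↦ (a, f_s)` is a homomorphism `Ĝ²(n) →* G²(n)`. It fixes `G²(n)`, hence is onto, and its
kernel consists of the `(I, h)` with `h_s = 0`, i.e. `A₂(n)`; the first isomorphism theorem concludes.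
-/

section SymPart

variable {n : ℕ}

lemma symPart_apply (f : L2 n) (u v : V n) :
    symPart f u v = (1/2 : ℝ) • (f u v + f v u) := by
  simp [symPart]

lemma symPart_comm (f : L2 n) (u v : V n) : symPart f u v = symPart f v u := by
  simp only [symPart_apply, add_comm]

lemma symPart_of_symm {f : L2 n} (hf : ∀ u v, f u v = f v u) : symPart f = f := by
  refine LinearMap.ext₂ fun u v => ?_
  rw [symPart_apply, hf v u]
  module

lemma symPart_eq_zero_iff {f : L2 n} : symPart f = 0 ↔ ∀ u v, f u v = -f v u := by
  refine ⟨fun h u v => ?_, fun h => ?_⟩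
  · have h0 : (1/2 : ℝ) • (f u v + f v u) = 0 := by rw [← symPart_apply, h]; rfl
    exact eq_neg_of_add_eq_zero_left ((smul_eq_zero.mp h0).resolve_left (by norm_num))
  · refine LinearMap.ext₂ fun u v => ?_
    simp [symPart_apply, h u v]

lemma symPart_add (f g : L2 n) : symPart (f + g) = symPart f + symPart g := by
  refine LinearMap.ext₂ fun u v => ?_
  simp only [symPart_apply, LinearMap.add_apply]
  module

lemma symPart_compr₂ (f : L2 n) (a : V n →ₗ[ℝ] V n) :
    symPart (f.compr₂ a) = (symPart f).compr₂ a := by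
  refine LinearMap.ext₂ fun u v => ?_
  simp [symPart_apply]

lemma symPart_compl₁₂ (f : L2 n) (b : V n →ₗ[ℝ] V n) :
    symPart (f.compl₁₂ b b) = (symPart f).compl₁₂ b b := by
  refine LinearMap.ext₂ fun u v => ?_
  simp [symPart_apply]

end SymPart

noncomputable def symPartHom (n : ℕ) : Ghat n →* G2 n where
  toFun p := ⟨(p.1, symPart p.2), symPart_comm p.2⟩
  map_one' := Subtype.ext <| Prod.ext rfl <| symPart_of_symm fun _ _ => rfl
  map_mul' p q := Subtype.ext <| Prod.ext rfl <| by
    simp only [ghat_mul_def, gmul, symPart_add, symPart_compr₂, symPart_compl₁₂]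
    rfl

lemma symPartHom_surjective (n : ℕ) : Function.Surjective (symPartHom n) :=
  fun g => ⟨g, Subtype.ext <| Prod.ext rfl <| symPart_of_symm g.2⟩

lemma ker_symPartHom (n : ℕ) : (symPartHom n).ker = A2 n := by
  ext p
  simp only [MonoidHom.mem_ker, Subtype.ext_iff, Prod.ext_iff]
  exact and_congr Iff.rfl symPart_eq_zero_iff

/-- the map `(a,f)·A₂(n) ↦ (a, f_s)` is a well-defined group isomorphism
from the quotient group `Ĝ²(n)/A₂(n)` onto `G²(n)`. -/
theorem quotient_iso_G2 (n : ℕ) :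
    ∃ μ : (Ghat n ⧸ A2 n) ≃* G2 n,
      ∀ p : Ghat n, (μ (QuotientGroup.mk p) : Ghat n) = (p.1, symPart p.2) :=
  ⟨QuotientGroup.liftEquiv (A2 n) (symPartHom_surjective n) (ker_symPartHom n).symm,
    fun _ => rfl⟩
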